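/- arXiv:2306.00406 — 2 statements merged into one kernel-verified Lean document; each statement's English description precedes it below -/
import Mathlib

section
/- Let p ≥ 3, let v₁,…,v_k ∈ ℝ^n be orthonormal with positive weights λ₁,…,λ_k, let u ∈ ℝ^n be a unit vector, and let j ∈ {2,…,k}. Define u' := w/‖w‖₂ where w := Σ_{ℓ=1}^k λ_ℓ ⟨v_ℓ, u⟩^{p-1} v_ℓ. Suppose (i) λ_j |⟨v_j, u⟩|^{p-2} ≤ (1/4) λ₁ |⟨v₁, u⟩|^{p-2}, and (ii) ⟨v₁, u⟩ ≠ 0. Then |⟨v_j, u'⟩| / |⟨v₁, u'⟩| ≤ (1/4) · |⟨v_j, u⟩| / |⟨v₁, u⟩|. -/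
open RealInnerProductSpace

theorem stmt_12 (n k p : ℕ) (hp : 3 ≤ p) (hk : 2 ≤ k)
    (v : Fin k → EuclideanSpace ℝ (Fin n)) (hv : Orthonormal ℝ v)
    (lam : Fin k → ℝ) (hlam : ∀ i, 0 < lam i)
    (u : EuclideanSpace ℝ (Fin n)) (hu : ‖u‖ = 1)
    (h0 : Fin k) (hh0 : h0 = ⟨0, by omega⟩)
    (j : Fin k) (hj : j ≠ h0)
    (hv1u : ⟪v h0, u⟫ ≠ 0)
    (hgap : lam j * |⟪v j, u⟫| ^ (p - 2) ≤ (1 / 4) * lam h0 * |⟪v h0, u⟫| ^ (p - 2))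
    (w : EuclideanSpace ℝ (Fin n))
    (hw : w = ∑ ℓ, (lam ℓ * ⟪v ℓ, u⟫ ^ (p - 1)) • v ℓ)
    (u' : EuclideanSpace ℝ (Fin n)) (hu' : u' = ‖w‖⁻¹ • w) :
    |⟪v j, u'⟫| / |⟪v h0, u'⟫| ≤ (1 / 4) * (|⟪v j, u⟫| / |⟪v h0, u⟫|) := by
  have hinner : ∀ i, ⟪v i, w⟫ = lam i * ⟪v i, u⟫ ^ (p - 1) := by
    intro i
    rw [hw, hv.inner_right_fintype]
  have hwne : w ≠ 0 := by
    intro h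
    have h2 := hinner h0
    rw [h, inner_zero_right] at h2
    exact (mul_ne_zero (hlam h0).ne' (pow_ne_zero _ hv1u)) h2.symm
  have hc : 0 < ‖w‖⁻¹ := inv_pos.2 (norm_pos_iff.2 hwne)
  have hiu' : ∀ i, ⟪v i, u'⟫ = ‖w‖⁻¹ * (lam i * ⟪v i, u⟫ ^ (p - 1)) := by
    intro i
    rw [hu', real_inner_smul_right, hinner]
  set A := |⟪v h0, u⟫| with hAdef
  set B := |⟪v j, u⟫| with hBdef
  have hA : 0 < A := abs_pos.2 hv1u
  have hB : 0 ≤ B := abs_nonneg _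
  have hq : p - 1 = (p - 2) + 1 := by omega
  set q := p - 2 with hqdef
  rw [hiu' j, hiu' h0, abs_mul, abs_mul, abs_mul, abs_mul, abs_pow, abs_pow,
    abs_of_pos hc, abs_of_pos (hlam j), abs_of_pos (hlam h0),
    mul_div_mul_left _ _ hc.ne', ← hAdef, ← hBdef, hq, pow_succ, pow_succ]
  have hden : 0 < lam h0 * (A ^ q * A) := mul_pos (hlam h0) (mul_pos (pow_pos hA q) hA)
  have hrhs : (1 : ℝ) / 4 * (B / A) = B / (4 * A) := by ring
  rw [hrhs, div_le_div_iff₀ hden (by positivity : (0:ℝ) < 4 * A)]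
  nlinarith [mul_le_mul_of_nonneg_right hgap (mul_nonneg hB hA.le),
    pow_nonneg hA.le q, pow_nonneg hB q, (hlam h0).le]
end

section
/- Let p ≥ 3, let v₁,…,v_k ∈ ℝ^n be orthonormal with positive weights λ₁,…,λ_k satisfying λ_j |⟨v_j, u⟩|^{p-2} ≤ (1/4) λ₁ |⟨v₁, u⟩|^{p-2} for all j ∈ {2,…,k}, and let u be a unit vector with ⟨v₁,u⟩ ≠ 0. Define u' := w/‖w‖₂ with w := Σ_ℓ λ_ℓ ⟨v_ℓ,u⟩^{p-1} v_ℓ, and let V := (v₂,…,v_n) complete v₁ to an orthonormal basis. Then tan θ(v₁, u') ≤ (1/4) tan θ(v₁, u), where tan θ(v₁, x) := ‖V^T x‖₂ / |⟨v₁, x⟩|. -/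
/-!
Write `c j = ⟪v j, u⟫` and `w = ∑ f j • v j` with `f j = λ_j c_j^{p-1}`. Since
`|f j| = (λ_j |c_j|^{p-2}) |c_j|`, the gap hypothesis says `|f j| ≤ K |c j|` for `j ≠ 1`, where
`|f 1| = 4 K |c 1|`. By orthonormality the component of `w` orthogonal to `v 1` has squared norm
`∑_{j ≠ 1} f j ² ≤ K² ∑_{j ≠ 1} c j ²`, and by Bessel the last sum is at most the squared norm of
the component of `u` orthogonal to `v 1`. Dividing by `|f 1| = 4 K |c 1|` gives the contraction by
`1/4`; normalising `w` does not change the angle.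
-/

open RealInnerProductSpace Finset

variable {E : Type*} [NormedAddCommGroup E] [InnerProductSpace ℝ E]

/-- For a unit vector `a`, `x - ⟪a, x⟫ • a` is the component of `x` orthogonal to `a`, so this is
`tan θ(a, x)` (and `0` when `x ⟂ a`). -/
noncomputable def tanAngle (a x : E) : ℝ :=
  ‖x - ⟪a, x⟫ • a‖ / |⟪a, x⟫|

theorem tanAngle_smul (a x : E) {c : ℝ} (hc : c ≠ 0) : tanAngle a (c • x) = tanAngle a x := by
  rw [tanAngle, tanAngle, real_inner_smul_right, ← smul_smul, ← smul_sub, norm_smul, abs_mul,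
    Real.norm_eq_abs, mul_div_mul_left _ _ (abs_ne_zero.mpr hc)]

namespace Orthonormal

variable {ι : Type*} [Fintype ι] [DecidableEq ι] {v : ι → E}

theorem norm_sum_smul_sub_smul_sq (hv : Orthonormal ℝ v) (f : ι → ℝ) (i : ι) :
    ‖∑ j, f j • v j - f i • v i‖ ^ 2 = ∑ j ∈ univ.erase i, f j ^ 2 := by
  rw [← sum_erase_add _ _ (mem_univ i), add_sub_cancel_right, ← real_inner_self_eq_norm_sq,
    hv.inner_sum]
  simp only [conj_trivial, sq]

theorem sum_erase_inner_sq_le (hv : Orthonormal ℝ v) (i : ι) (x : E) :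
    ∑ j ∈ univ.erase i, ⟪v j, x⟫ ^ 2 ≤ ‖x - ⟪v i, x⟫ • v i‖ ^ 2 := by
  refine le_of_eq_of_le (sum_congr rfl fun j hj => ?_) (hv.sum_inner_products_le _)
  rw [inner_sub_right, real_inner_smul_right, orthonormal_iff_ite.mp hv j i,
    if_neg (ne_of_mem_erase hj), mul_zero, sub_zero, Real.norm_eq_abs, sq_abs]

theorem norm_sum_smul_sub_smul_le (hv : Orthonormal ℝ v) {f : ι → ℝ} {i : ι} {x : E} {K : ℝ}
    (hK : 0 ≤ K) (hf : ∀ j, j ≠ i → |f j| ≤ K * |⟪v j, x⟫|) :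
    ‖∑ j, f j • v j - f i • v i‖ ≤ K * ‖x - ⟪v i, x⟫ • v i‖ := by
  have hsq : ∀ j ∈ univ.erase i, f j ^ 2 ≤ K ^ 2 * ⟪v j, x⟫ ^ 2 := fun j hj => by
    rw [← sq_abs, ← sq_abs ⟪v j, x⟫, ← mul_pow]
    exact pow_le_pow_left₀ (abs_nonneg _) (hf j (ne_of_mem_erase hj)) 2
  refine le_of_sq_le_sq ?_ (by positivity)
  calc ‖∑ j, f j • v j - f i • v i‖ ^ 2 = ∑ j ∈ univ.erase i, f j ^ 2 :=
        hv.norm_sum_smul_sub_smul_sq f i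
    _ ≤ K ^ 2 * ∑ j ∈ univ.erase i, ⟪v j, x⟫ ^ 2 := by rw [mul_sum]; exact sum_le_sum hsq
    _ ≤ (K * ‖x - ⟪v i, x⟫ • v i‖) ^ 2 := by
        rw [mul_pow]; exact mul_le_mul_of_nonneg_left (hv.sum_erase_inner_sq_le i x) (sq_nonneg K)

theorem tanAngle_sum_smul_le (hv : Orthonormal ℝ v) {f : ι → ℝ} {i : ι} {x : E} {K : ℝ}
    (hK : 0 ≤ K) (hf : ∀ j, j ≠ i → |f j| ≤ K * |⟪v j, x⟫|) (hx : ⟪v i, x⟫ ≠ 0) :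
    tanAngle (v i) (∑ j, f j • v j) ≤ K * |⟪v i, x⟫| / |f i| * tanAngle (v i) x := by
  rw [tanAngle, tanAngle, hv.inner_right_fintype]
  calc ‖∑ j, f j • v j - f i • v i‖ / |f i| ≤ K * ‖x - ⟪v i, x⟫ • v i‖ / |f i| :=
        div_le_div_of_nonneg_right (hv.norm_sum_smul_sub_smul_le hK hf) (abs_nonneg _)
    _ = K * |⟪v i, x⟫| / |f i| * (‖x - ⟪v i, x⟫ • v i‖ / |⟪v i, x⟫|) := by
        field_simp

end Orthonormal

theorem abs_mul_pow_sub_one {l : ℝ} (hl : 0 ≤ l) (c : ℝ) {p : ℕ} (hp : 2 ≤ p) :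
    |l * c ^ (p - 1)| = l * |c| ^ (p - 2) * |c| := by
  rw [abs_mul, abs_pow, abs_of_nonneg hl, show p - 1 = p - 2 + 1 by omega, pow_succ, mul_assoc]

theorem stmt_13 (n k p : ℕ) (hp : 3 ≤ p)
    (v : Fin k → EuclideanSpace ℝ (Fin n)) (hv : Orthonormal ℝ v)
    (lam : Fin k → ℝ) (hlam : ∀ i, 0 < lam i)
    (u : EuclideanSpace ℝ (Fin n))
    (h0 : Fin k)
    (hv1u : ⟪v h0, u⟫ ≠ 0)
    (hgap : ∀ j : Fin k, j ≠ h0 →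
      lam j * |⟪v j, u⟫| ^ (p - 2) ≤ (1 / 4) * lam h0 * |⟪v h0, u⟫| ^ (p - 2))
    (w : EuclideanSpace ℝ (Fin n))
    (hw : w = ∑ ℓ, (lam ℓ * ⟪v ℓ, u⟫ ^ (p - 1)) • v ℓ)
    (u' : EuclideanSpace ℝ (Fin n)) (hu' : u' = ‖w‖⁻¹ • w) :
    ‖u' - ⟪v h0, u'⟫ • v h0‖ / |⟪v h0, u'⟫|
      ≤ (1 / 4) * (‖u - ⟪v h0, u⟫ • v h0‖ / |⟪v h0, u⟫|) := by
  set f : Fin k → ℝ := fun ℓ => lam ℓ * ⟪v ℓ, u⟫ ^ (p - 1)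
  set K := 1 / 4 * lam h0 * |⟪v h0, u⟫| ^ (p - 2)
  have hK : 0 < K := mul_pos (mul_pos (by norm_num) (hlam h0)) (pow_pos (abs_pos.mpr hv1u) _)
  have hf0 : |f h0| = 4 * K * |⟪v h0, u⟫| := by
    rw [abs_mul_pow_sub_one (hlam h0).le _ (by omega)]; ring
  have hf : ∀ j, j ≠ h0 → |f j| ≤ K * |⟪v j, u⟫| := fun j hj => by
    rw [abs_mul_pow_sub_one (hlam j).le _ (by omega)]
    exact mul_le_mul_of_nonneg_right (hgap j hj) (abs_nonneg _)
  have hf0_ne : f h0 ≠ 0 := mul_ne_zero (hlam h0).ne' (pow_ne_zero _ hv1u)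
  have hw_ne : w ≠ 0 := fun h => hf0_ne <| by
    rw [← hv.inner_right_fintype f h0, ← hw, h, inner_zero_right]
  change tanAngle (v h0) u' ≤ 1 / 4 * tanAngle (v h0) u
  rw [hu', tanAngle_smul _ _ (inv_ne_zero (norm_ne_zero_iff.mpr hw_ne)), hw]
  calc tanAngle (v h0) (∑ ℓ, f ℓ • v ℓ) ≤ K * |⟪v h0, u⟫| / |f h0| * tanAngle (v h0) u :=
        hv.tanAngle_sum_smul_le hK.le hf hv1u
    _ = 1 / 4 * tanAngle (v h0) u := by
        rw [hf0]
        field_simp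
end
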